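/- Let f : ℝ^d → ℝ be differentiable, μ-PL, and β-smooth, and let x' = x - η g with ‖g - ∇f(x)‖ ≤ ε and η ≤ min{1/β, 4/μ}. If 0 ≤ f(x) - f* ≤ 4ε²/μ, then f(x') - f* ≤ 4ε²/μ. -/

import Mathlib

open RealInnerProductSpace

/-- Descent lemma for functions with `β`-Lipschitz gradient. -/
lemma descent_lemma_aux {d : ℕ} {f : EuclideanSpace ℝ (Fin d) → ℝ} {β : ℝ}
    (hf : Differentiable ℝ f) (hβ : 0 < β)
    (hsmooth : ∀ y z, ‖gradient f y - gradient f z‖ ≤ β * ‖y - z‖)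
    (x v : EuclideanSpace ℝ (Fin d)) :
    f (x + v) ≤ f x + ⟪gradient f x, v⟫ + β / 2 * ‖v‖ ^ 2 := by
  set φ : ℝ → ℝ := fun t =>
    f (x + t • v) - t * ⟪gradient f x, v⟫ - β / 2 * t ^ 2 * ‖v‖ ^ 2 with hφ
  have hder : ∀ t : ℝ, HasDerivAt φ
      (⟪gradient f (x + t • v), v⟫ - ⟪gradient f x, v⟫ - β * t * ‖v‖ ^ 2) t := by
    intro t
    have h1 : HasDerivAt (fun t : ℝ => x + t • v) v t := by
      simpa using ((hasDerivAt_id t).smul_const v).const_add x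
    have h2 : HasGradientAt f (gradient f (x + t • v)) (x + t • v) :=
      (hf (x + t • v)).hasGradientAt
    have h3 : HasDerivAt (fun t : ℝ => f (x + t • v))
        (⟪gradient f (x + t • v), v⟫) t := by
      have := h2.hasFDerivAt.comp_hasDerivAt t h1
      simpa [InnerProductSpace.toDual_apply_apply, Function.comp_def] using this
    have h4 : HasDerivAt (fun t : ℝ => t * ⟪gradient f x, v⟫)
        (⟪gradient f x, v⟫) t := by
      simpa using (hasDerivAt_id t).mul_const (⟪gradient f x, v⟫)
    have h5 : HasDerivAt (fun t : ℝ => β / 2 * t ^ 2 * ‖v‖ ^ 2)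
        (β * t * ‖v‖ ^ 2) t := by
      have : HasDerivAt (fun t : ℝ => t ^ 2) (2 * t) t := by
        simpa using hasDerivAt_pow 2 t
      have := (this.const_mul (β / 2)).mul_const (‖v‖ ^ 2)
      rw [show β * t * ‖v‖ ^ 2 = β / 2 * (2 * t) * ‖v‖ ^ 2 by ring]
      exact this
    rw [hφ]
    exact (h3.sub h4).sub h5
  have hanti : AntitoneOn φ (Set.Icc 0 1) := by
    apply antitoneOn_of_deriv_nonpos (convex_Icc 0 1)
    · intro t _
      exact (hder t).continuousAt.continuousWithinAt
    · intro t ht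
      exact (hder t).differentiableAt.differentiableWithinAt
    · intro t ht
      rw [interior_Icc] at ht
      rw [(hder t).deriv]
      have hineq : ⟪gradient f (x + t • v) - gradient f x, v⟫ ≤ β * t * ‖v‖ ^ 2 := by
        calc ⟪gradient f (x + t • v) - gradient f x, v⟫
            ≤ ‖gradient f (x + t • v) - gradient f x‖ * ‖v‖ := real_inner_le_norm _ _
          _ ≤ (β * ‖(x + t • v) - x‖) * ‖v‖ := by
              apply mul_le_mul_of_nonneg_right (hsmooth _ _) (norm_nonneg _)
          _ = β * t * ‖v‖ ^ 2 := by
              rw [add_sub_cancel_left, norm_smul]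
              simp [Real.norm_eq_abs, abs_of_pos ht.1]
              ring
      rw [inner_sub_left] at hineq
      linarith
  have h01 := hanti (Set.left_mem_Icc.2 zero_le_one) (Set.right_mem_Icc.2 zero_le_one) zero_le_one
  simp only [hφ, zero_smul, add_zero, zero_mul, zero_pow, one_smul, one_mul, mul_one,
    one_pow, mul_zero, sub_zero, ne_eq, OfNat.ofNat_ne_zero, not_false_eq_true] at h01
  linarith

/-- One step of inexact gradient descent on a `μ`-PL, `β`-smooth function:
if the gap is at most `4ε²/μ`, it stays at most `4ε²/μ`. -/
theorem corrupted_gd_stability_step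
    {d : ℕ} {f : EuclideanSpace ℝ (Fin d) → ℝ} {fstar : ℝ}
    {μ β η ε : ℝ}
    (hf : Differentiable ℝ f)
    (hmin : ∀ y, fstar ≤ f y)
    (hμ : 0 < μ)
    (hPL : ∀ y, μ * (f y - fstar) ≤ ‖gradient f y‖ ^ 2)
    (hβ : 0 < β)
    (hsmooth : ∀ y z, ‖gradient f y - gradient f z‖ ≤ β * ‖y - z‖)
    (hη : 0 < η) (hηmin : η ≤ min (1 / β) (4 / μ))
    (hε : 0 ≤ ε)
    (x g x' : EuclideanSpace ℝ (Fin d))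
    (hupd : x' = x - η • g)
    (herr : ‖g - gradient f x‖ ≤ ε)
    (hgap₀ : 0 ≤ f x - fstar)
    (hgap : f x - fstar ≤ 4 * ε ^ 2 / μ) :
    f x' - fstar ≤ 4 * ε ^ 2 / μ := by
  set G := gradient f x with hG
  have hx' : x' = x + (-(η • g)) := by rw [hupd]; abel
  have hdesc := descent_lemma_aux hf hβ hsmooth x (-(η • g))
  rw [← hx'] at hdesc
  have hinner : ⟪G, -(η • g)⟫ = -(η * ⟪G, g⟫) := by
    rw [inner_neg_right, real_inner_smul_right]
  have hnorm : ‖-(η • g)‖ ^ 2 = η ^ 2 * ‖g‖ ^ 2 := by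
    rw [norm_neg, norm_smul, mul_pow, Real.norm_eq_abs, sq_abs]
  rw [hinner, hnorm] at hdesc
  -- key identity: ‖g‖² - 2⟪G,g⟫ = ‖g - G‖² - ‖G‖²
  have hid : ‖g - G‖ ^ 2 = ‖g‖ ^ 2 - 2 * ⟪g, G⟫ + ‖G‖ ^ 2 := by
    rw [norm_sub_sq_real]
  have hsym : ⟪G, g⟫ = ⟪g, G⟫ := real_inner_comm _ _
  have hβη : η * β ≤ 1 := by
    have h1 : η ≤ 1 / β := le_trans hηmin (min_le_left _ _)
    rw [le_div_iff₀ hβ] at h1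
    linarith
  have hημ : η * μ ≤ 4 := by
    have h1 : η ≤ 4 / μ := le_trans hηmin (min_le_right _ _)
    rw [le_div_iff₀ hμ] at h1
    linarith
  have herr2 : ‖g - G‖ ^ 2 ≤ ε ^ 2 := by
    apply pow_le_pow_left₀ (norm_nonneg _) herr
  have hPLx : μ * (f x - fstar) ≤ ‖G‖ ^ 2 := hPL x
  have hgapμ : μ * (f x - fstar) ≤ 4 * ε ^ 2 := (le_div_iff₀' hμ).mp hgap
  have hkey : f x' ≤ f x + η / 2 * (ε ^ 2 - ‖G‖ ^ 2) := by
    have hq : 0 ≤ (1 - η * β) * η * ‖g‖ ^ 2 :=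
      mul_nonneg (mul_nonneg (sub_nonneg.2 hβη) hη.le) (sq_nonneg _)
    rw [hid] at herr2
    have hmul := mul_le_mul_of_nonneg_left herr2 (by linarith : (0:ℝ) ≤ η / 2)
    rw [hsym] at hdesc
    generalize hDD : (inner ℝ g G : ℝ) = D at hmul hdesc
    generalize (‖g‖ : ℝ) = N at hq hmul hdesc
    generalize (‖G‖ : ℝ) = H at hmul ⊢
    nlinarith [hq, hmul, hdesc]
  have hgoal : f x - fstar + η / 2 * (ε ^ 2 - ‖G‖ ^ 2) ≤ 4 * ε ^ 2 / μ := by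
    rw [le_div_iff₀ hμ]
    have h1 : 0 ≤ η * μ * (‖G‖ ^ 2 - μ * (f x - fstar)) :=
      mul_nonneg (mul_nonneg hη.le hμ.le) (sub_nonneg.2 hPLx)
    rcases le_or_gt (η * μ) 2 with hs | hs
    · have h2 : 0 ≤ (4 * ε ^ 2 - μ * (f x - fstar)) * (2 - η * μ) :=
        mul_nonneg (sub_nonneg.2 hgapμ) (sub_nonneg.2 hs)
      have h4 : 0 ≤ η * μ * ε ^ 2 := mul_nonneg (mul_nonneg hη.le hμ.le) (sq_nonneg ε)
      linarith
    · have h2 : 0 ≤ μ * (f x - fstar) * (η * μ - 2) :=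
        mul_nonneg (mul_nonneg hμ.le hgap₀) (by linarith)
      have h3 : 0 ≤ (4 - η * μ) * ε ^ 2 :=
        mul_nonneg (by linarith) (sq_nonneg ε)
      linarith [sq_nonneg ε]
  linarith
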